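/- Let (X, τ) be a bornological locally convex Hausdorff space, τ̃ a locally convex Hausdorff topology on X, γ̃ = γ̃(τ, τ̃) the finest locally convex Hausdorff topology on X which coincides with τ̃ on every τ-bounded set, and assume a subset of X is τ-bounded iff it is γ̃-bounded. If (X, τ) satisfies (BBCl) for τ̃, then the dual (X, γ̃)' is the closure of (X, τ̃)' in (X, τ)'_b (closure with respect to the strong topology β((X,τ)', (X,τ))). -/

import Mathlib

open Topology Filter Set

universe u v w

section Defs

variable (𝕜 : Type u) [RCLike 𝕜]
variable (X : Type v) [AddCommGroup X] [Module 𝕜 X] [Module ℝ X] [IsScalarTower ℝ 𝕜 X]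

/-- von Neumann boundedness with respect to an explicit topology. -/
def VNB (t : TopologicalSpace X) (s : Set X) : Prop :=
  @Bornology.IsVonNBounded 𝕜 X _ _ _ t s

/-- `t` makes `X` a locally convex Hausdorff topological vector space over `𝕜`. -/
structure IsLCH (t : TopologicalSpace X) : Prop where
  tag : @IsTopologicalAddGroup X t _
  csmul : @ContinuousSMul 𝕜 X _ _ t
  t2 : @T2Space X t
  lcs : @LocallyConvexSpace ℝ X _ _ _ _ t

/-- Absolutely convex set: balanced and convex. -/
def AbsConvexS (s : Set X) : Prop := Balanced 𝕜 s ∧ Convex ℝ s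

/-- Condition (BBC): every `t`-bounded set is contained in an absolutely convex
`t`-bounded `tt`-compact set. -/
def BBC (t tt : TopologicalSpace X) : Prop :=
  ∀ s : Set X, VNB 𝕜 X t s →
    ∃ B : Set X, s ⊆ B ∧ AbsConvexS 𝕜 X B ∧ VNB 𝕜 X t B ∧ @IsCompact X tt B

/-- Condition (BBCl): every `t`-bounded set is contained in an absolutely convex
`t`-bounded `tt`-closed set. -/
def BBCl (t tt : TopologicalSpace X) : Prop :=
  ∀ s : Set X, VNB 𝕜 X t s →
    ∃ B : Set X, s ⊆ B ∧ AbsConvexS 𝕜 X B ∧ VNB 𝕜 X t B ∧ @IsClosed X tt B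

/-- Condition (CNC): `t` has a 0-neighbourhood basis of absolutely convex `tt`-closed sets. -/
def CNC (t tt : TopologicalSpace X) : Prop :=
  ∀ U ∈ @nhds X t 0, ∃ V ∈ @nhds X t 0, V ⊆ U ∧ AbsConvexS 𝕜 X V ∧ @IsClosed X tt V

/-- `g` and `tt` induce the same subspace topology on every `t`-bounded set. -/
def AgreeOnBounded (t tt g : TopologicalSpace X) : Prop :=
  ∀ s : Set X, VNB 𝕜 X t s →
    TopologicalSpace.induced ((↑) : s → X) g = TopologicalSpace.induced ((↑) : s → X) tt

/-- `g` is the finest locally convex Hausdorff topology on `X` coinciding with `tt` on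
`t`-bounded sets. -/
def IsGamma (t tt g : TopologicalSpace X) : Prop :=
  IsLCH 𝕜 X g ∧ AgreeOnBounded 𝕜 X t tt g ∧
    ∀ g' : TopologicalSpace X, IsLCH 𝕜 X g' → AgreeOnBounded 𝕜 X t tt g' → g ≤ g'

/-- Semi-Montel: every bounded set is relatively compact. -/
def SemiMontel (t : TopologicalSpace X) : Prop :=
  ∀ s : Set X, VNB 𝕜 X t s → @IsCompact X t (@closure X t s)

/-- Barrelled: every barrel is a 0-neighbourhood. -/
def BarrelledTop (t : TopologicalSpace X) : Prop :=
  ∀ B : Set X, @IsClosed X t B → AbsConvexS 𝕜 X B → Absorbent 𝕜 B → B ∈ @nhds X t 0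

/-- Quasi-barrelled: every bornivorous barrel is a 0-neighbourhood. -/
def QuasiBarrelledTop (t : TopologicalSpace X) : Prop :=
  ∀ B : Set X, @IsClosed X t B → AbsConvexS 𝕜 X B →
    (∀ s : Set X, VNB 𝕜 X t s → Absorbs 𝕜 B s) → B ∈ @nhds X t 0

/-- Completeness of a topological abelian group topology (w.r.t. its canonical uniformity). -/
def CompleteTop (t : TopologicalSpace X) : Prop :=
  ∃ h : @IsTopologicalAddGroup X t _,
    @CompleteSpace X (@IsTopologicalAddGroup.rightUniformSpace X _ t h)

/-- Quasi-completeness: every closed bounded set is complete. -/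
def QuasiCompleteTop (t : TopologicalSpace X) : Prop :=
  ∃ h : @IsTopologicalAddGroup X t _,
    ∀ s : Set X, @IsClosed X t s → VNB 𝕜 X t s →
      @IsComplete X (@IsTopologicalAddGroup.rightUniformSpace X _ t h) s

/-- Bornological: every bounded linear map into a locally convex Hausdorff space
is continuous. -/
def Bornological (t : TopologicalSpace X) : Prop :=
  ∀ (Y : Type w) (_ : AddCommGroup Y) (_ : Module 𝕜 Y) (_ : Module ℝ Y)
    (_ : IsScalarTower ℝ 𝕜 Y) (tY : TopologicalSpace Y), IsLCH 𝕜 Y tY →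
    ∀ f : X →ₗ[𝕜] Y, (∀ s : Set X, VNB 𝕜 X t s → VNB 𝕜 Y tY (f '' s)) →
      @Continuous X Y t tY f

/-- The norm `N` induces the topology `t`. -/
def InducedByNorm (t : TopologicalSpace X) (N : Seminorm 𝕜 X) : Prop :=
  (∀ x : X, N x = 0 → x = 0) ∧
    (@nhds X t 0).HasBasis (fun ε : ℝ => 0 < ε) (fun ε => {x : X | N x < ε})

/-- The topological dual of `(X, t)` as a submodule of the space of linear functionals. -/
def dualSub (t : TopologicalSpace X) : Submodule 𝕜 (X →ₗ[𝕜] 𝕜) where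
  carrier := {f : X →ₗ[𝕜] 𝕜 | @Continuous X 𝕜 t _ f}
  add_mem' := by
    intro f g hf hg
    letI := t
    exact (Continuous.add hf hg : Continuous fun x => f x + g x)
  zero_mem' := by
    letI := t
    exact (continuous_const : Continuous fun _ : X => (0 : 𝕜))
  smul_mem' := by
    intro c f hf
    letI := t
    exact (Continuous.const_smul hf c : Continuous fun x => c • f x)

/-- Topology of uniform convergence on the members of `𝔖` on the function space `X → 𝕜`. -/
def funUC (𝔖 : Set (Set X)) : TopologicalSpace (X → 𝕜) :=
  TopologicalSpace.induced (UniformOnFun.ofFun 𝔖) (UniformOnFun.topologicalSpace X 𝕜 𝔖)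

/-- Topology on the dual of `(X, t)` of uniform convergence on the members of `𝔖`. -/
def dualTopOn (t : TopologicalSpace X) (𝔖 : Set (Set X)) :
    TopologicalSpace ↥(dualSub 𝕜 X t) :=
  TopologicalSpace.induced (fun f => ((f : X →ₗ[𝕜] 𝕜) : X → 𝕜)) (funUC 𝕜 X 𝔖)

/-- The strong topology `β(X', X)` on the dual of `(X, t)`. -/
def strongDualTop (t : TopologicalSpace X) : TopologicalSpace ↥(dualSub 𝕜 X t) :=
  dualTopOn 𝕜 X t {s : Set X | VNB 𝕜 X t s}

/-- The space `X'_{B,tt}` of linear functionals whose restriction to every `t`-bounded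
set is `tt`-continuous. -/
def bdual (t tt : TopologicalSpace X) : Submodule 𝕜 (X →ₗ[𝕜] 𝕜) where
  carrier := {f : X →ₗ[𝕜] 𝕜 | ∀ s : Set X, VNB 𝕜 X t s → @ContinuousOn X 𝕜 tt _ f s}
  add_mem' := by
    intro f g hf hg s hs
    letI := tt
    exact (hf s hs).add (hg s hs)
  zero_mem' := by
    intro s hs
    letI := tt
    exact continuousOn_const
  smul_mem' := by
    intro c f hf s hs
    letI := tt
    exact (hf s hs).const_smul c

/-- The topology `β` of uniform convergence on `t`-bounded sets on `X'_{B,tt}`. -/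
def bdualTop (t tt : TopologicalSpace X) : TopologicalSpace ↥(bdual 𝕜 X t tt) :=
  TopologicalSpace.induced (fun f => ((f : X →ₗ[𝕜] 𝕜) : X → 𝕜))
    (funUC 𝕜 X {s : Set X | VNB 𝕜 X t s})

/-- The weak topology `σ(X, (X,tt)')` on `X`. -/
def weakTopOf (tt : TopologicalSpace X) : TopologicalSpace X :=
  TopologicalSpace.induced
    (fun x => (fun f : ↥(dualSub 𝕜 X tt) => (f : X →ₗ[𝕜] 𝕜) x)) Pi.topologicalSpace

/-- Semi-reflexivity of `(X, g)`: every strongly continuous linear functional on the dual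
is an evaluation. -/
def SemiReflexiveTop (g : TopologicalSpace X) : Prop :=
  ∀ F : ↥(dualSub 𝕜 X g) →ₗ[𝕜] 𝕜, @Continuous _ _ (strongDualTop 𝕜 X g) _ F →
    ∃ x : X, ∀ f : ↥(dualSub 𝕜 X g), F f = (f : X →ₗ[𝕜] 𝕜) x

end Defs

section TopIso

variable (𝕜 : Type u) [RCLike 𝕜]

/-- `e` is a topological isomorphism from `(A, tA)` to `(B, tB)`. -/
def IsTopIso {A : Type*} {B : Type*} [AddCommGroup A] [Module 𝕜 A] [AddCommGroup B]
    [Module 𝕜 B] (tA : TopologicalSpace A) (tB : TopologicalSpace B) (e : A ≃ₗ[𝕜] B) : Prop :=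
  @Continuous A B tA tB e ∧ @Continuous B A tB tA e.symm

end TopIso

section Extra

variable (𝕜 : Type u) [RCLike 𝕜]

/-- Point evaluation functional on a space of functions. -/
def evalLM {Ω : Type w} (F : Submodule 𝕜 (Ω → 𝕜)) (x : Ω) : ↥F →ₗ[𝕜] 𝕜 where
  toFun f := (f : Ω → 𝕜) x
  map_add' _ _ := rfl
  map_smul' _ _ := rfl

/-- The topology of pointwise convergence on a space of functions. -/
def ptwiseTop {Ω : Type w} (F : Submodule 𝕜 (Ω → 𝕜)) : TopologicalSpace ↥F :=
  TopologicalSpace.induced ((↑) : ↥F → (Ω → 𝕜)) Pi.topologicalSpace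

/-- Packaging of a candidate (pre)dual space: a type together with module and
topological data. -/
structure DualRep (𝕜 : Type u) [RCLike 𝕜] (X : Type v) [AddCommGroup X] [Module 𝕜 X] where
  Y : Type (max u v)
  [addgrp : AddCommGroup Y]
  [mod : Module 𝕜 Y]
  [modR : Module ℝ Y]
  [tower : IsScalarTower ℝ 𝕜 Y]
  tY : TopologicalSpace Y

attribute [instance] DualRep.addgrp DualRep.mod DualRep.modR DualRep.tower

end Extra

/-! The inclusions `(X, τ̃)' ⊆ (X, γ̃)' ⊆ (X, τ)'` hold because `γ̃ ≤ τ̃` by maximality of `γ̃`,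
and a `γ̃`-continuous functional is `τ`-bounded, hence `τ`-continuous as `τ` is bornological.

By maximality of `γ̃` again, a functional is `γ̃`-continuous iff it is `τ̃`-continuous on every
`τ`-bounded set, and this is preserved by uniform limits on bounded sets, i.e. by `β`-limits.

Conversely let `F` be `γ̃`-continuous, `S` bounded and `ε > 0`. Take `B ⊇ S ∪ {0}` absolutely convex
and bounded by (BBCl). Continuity of `F` on `B` at `0` gives a continuous seminorm `p` of `τ̃`
with `‖F‖ ≤ ε` on `B ∩ {p < 1}`. By Hahn–Banach there is a real functional below the infimal
convolution of `ε p` and `μ_B - re F`; its complexification `G` satisfies `‖G‖ ≤ ε p`, so `G` is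
`τ̃`-continuous, and `‖F - G‖ ≤ ε` on `B ⊇ S`. -/

open Pointwise RCLike

section VonNeumannBounded

variable {𝕜 : Type u} [RCLike 𝕜] {X : Type v} [AddCommGroup X] [Module 𝕜 X]
variable {t : TopologicalSpace X}

theorem vnb_zero : VNB 𝕜 X t 0 :=
  fun _ hV => Absorbs.zero (@mem_of_mem_nhds _ t _ _ hV)

theorem VNB.union {s₁ s₂ : Set X} (h₁ : VNB 𝕜 X t s₁) (h₂ : VNB 𝕜 X t s₂) :
    VNB 𝕜 X t (s₁ ∪ s₂) :=
  @Bornology.IsVonNBounded.union 𝕜 X _ _ _ t _ _ h₁ h₂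

theorem VNB.image {s : Set X} (hs : VNB 𝕜 X t s) {f : X →ₗ[𝕜] 𝕜} (hf : @Continuous X 𝕜 t _ f) :
    Bornology.IsVonNBounded 𝕜 (f '' s) :=
  let := t
  Bornology.IsVonNBounded.image hs ⟨f, hf⟩

end VonNeumannBounded

theorem exists_linear_le_of_sublinear {E : Type*} [AddCommGroup E] [Module ℝ E] (N : E → ℝ)
    (N_hom : ∀ c : ℝ, 0 < c → ∀ x, N (c • x) = c * N x) (N_add : ∀ x y, N (x + y) ≤ N x + N y) :
    ∃ ψ : E →ₗ[ℝ] ℝ, ∀ x, ψ x ≤ N x := by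
  have N_zero : N 0 = 0 := by
    have h := N_hom 2 two_pos 0
    rw [smul_zero] at h
    linarith
  obtain ⟨ψ, -, hψ⟩ := exists_extension_of_le_sublinear ⟨⊥, 0⟩ N N_hom N_add fun ⟨x, hx⟩ => by
    simp [(Submodule.mem_bot ℝ).mp hx, N_zero]
  exact ⟨ψ, hψ⟩

section RealScalars

variable {𝕜 : Type u} [RCLike 𝕜] {X : Type v} [AddCommGroup X] [Module 𝕜 X]

theorem Balanced.norm_apply_le_one_of_re_le_one {B : Set X} (hB : Balanced 𝕜 B)
    {φ : X →ₗ[𝕜] 𝕜} (hφ : ∀ b ∈ B, re (φ b) ≤ 1) {b : X} (hb : b ∈ B) : ‖φ b‖ ≤ 1 := by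
  obtain ⟨c, hc, hcb⟩ := exists_norm_eq_mul_self (φ b)
  have h := hφ (c • b) (hB.smul_mem hc.le hb)
  rwa [map_smul, smul_eq_mul, ← hcb, ofReal_re] at h

variable [Module ℝ X] [IsScalarTower ℝ 𝕜 X]

theorem Seminorm.map_smul_of_nonneg (p : Seminorm 𝕜 X) {c : ℝ} (hc : 0 ≤ c) (x : X) :
    p (c • x) = c * p x := by
  rw [real_smul_eq_coe_smul (K := 𝕜), map_smul_eq_mul, norm_ofReal, abs_of_nonneg hc]

theorem Convex.balancedCore {V : Set X} (hV : Convex ℝ V) (hV₀ : (0 : X) ∈ V) :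
    Convex ℝ (balancedCore 𝕜 V) := by
  rw [balancedCore_eq_iInter hV₀]
  refine convex_iInter₂ fun r _ => ?_
  rw [← Set.image_smul]
  exact hV.linear_image ((r • LinearMap.id : X →ₗ[𝕜] X).restrictScalars ℝ)

end RealScalars

section Decomposition

variable {𝕜 : Type u} [RCLike 𝕜] {X : Type v} [AddCommGroup X] [Module 𝕜 X] [Module ℝ X]
variable (p : Seminorm 𝕜 X) (B : Set X) (f : X →ₗ[𝕜] 𝕜)

/-- The values `p (x + b) + s - re (f b)` with `b ∈ s • B`, `s ≥ 0`: their infimum is the infimal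
convolution of `p` with `b ↦ μ_B b - re (f b)`, `μ_B` being the (possibly infinite) gauge of `B`. -/
def infConvValues (x : X) : Set ℝ :=
  {r | ∃ s : ℝ, 0 ≤ s ∧ ∃ b ∈ s • B, p (x + b) + s - re (f b) = r}

noncomputable def infConv (x : X) : ℝ := sInf (infConvValues p B f x)

variable {p B f}

theorem self_mem_infConvValues (hB₀ : (0 : X) ∈ B) (x : X) : p x ∈ infConvValues p B f x :=
  ⟨0, le_rfl, 0, ⟨0, hB₀, smul_zero 0⟩, by simp⟩

variable [IsScalarTower ℝ 𝕜 X]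

theorem smul_infConvValues_subset {c : ℝ} (hc : 0 ≤ c) (x : X) :
    c • infConvValues p B f x ⊆ infConvValues p B f (c • x) := by
  rintro _ ⟨_, ⟨s, hs, _, ⟨b, hb, rfl⟩, rfl⟩, rfl⟩
  refine ⟨c * s, mul_nonneg hc hs, c • s • b, ⟨b, hb, (smul_smul c s b).symm⟩, ?_⟩
  dsimp only
  rw [← smul_add, p.map_smul_of_nonneg hc, f.map_smul_of_tower, smul_re, smul_eq_mul]
  ring

theorem infConvValues_smul {c : ℝ} (hc : 0 < c) (x : X) :
    infConvValues p B f (c • x) = c • infConvValues p B f x := by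
  refine Set.Subset.antisymm ?_ (smul_infConvValues_subset hc.le x)
  calc infConvValues p B f (c • x) = c • c⁻¹ • infConvValues p B f (c • x) := by
        rw [smul_inv_smul₀ hc.ne']
    _ ⊆ c • infConvValues p B f (c⁻¹ • c • x) :=
        Set.smul_set_mono (smul_infConvValues_subset (inv_nonneg.2 hc.le) _)
    _ = c • infConvValues p B f x := by rw [inv_smul_smul₀ hc.ne']

theorem infConv_smul {c : ℝ} (hc : 0 < c) (x : X) :
    infConv p B f (c • x) = c * infConv p B f x := by
  rw [infConv, infConvValues_smul hc, Real.sInf_smul_of_nonneg hc.le, smul_eq_mul, infConv]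

variable (hB : Balanced 𝕜 B) (hf : ∀ x ∈ B, p x < 1 → ‖f x‖ ≤ 1)
include hB hf

theorem norm_apply_le_add_of_mem_smul {s : ℝ} (hs : 0 ≤ s) {b : X} (hb : b ∈ s • B) :
    ‖f b‖ ≤ p b + s := by
  refine le_of_forall_gt_imp_ge_of_dense fun r hr => ?_
  have hr₀ : 0 < r := (add_nonneg (apply_nonneg p b) hs).trans_lt hr
  obtain ⟨b₀, hb₀, rfl⟩ := hb
  have hsr : ‖((r⁻¹ * s : ℝ) : 𝕜)‖ ≤ 1 := by
    rw [norm_ofReal, abs_of_nonneg (by positivity), inv_mul_le_one₀ hr₀]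
    linarith [apply_nonneg p (s • b₀)]
  have hmem : r⁻¹ • s • b₀ ∈ B := by
    rw [smul_smul, real_smul_eq_coe_smul (K := 𝕜)]
    exact hB.smul_mem hsr hb₀
  have hlt : p (r⁻¹ • s • b₀) < 1 := by
    rw [p.map_smul_of_nonneg (inv_nonneg.2 hr₀.le), inv_mul_lt_one₀ hr₀]
    linarith
  have h := hf _ hmem hlt
  rwa [f.map_smul_of_tower, norm_smul, Real.norm_of_nonneg (inv_nonneg.2 hr₀.le),
    inv_mul_le_one₀ hr₀] at h

theorem neg_le_of_mem_infConvValues {x : X} {r : ℝ} (hr : r ∈ infConvValues p B f x) :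
    -p x ≤ r := by
  obtain ⟨s, hs, b, hb, rfl⟩ := hr
  have h₁ := (re_le_norm (f b)).trans (norm_apply_le_add_of_mem_smul hB hf hs hb)
  have h₂ : p b ≤ p (x + b) + p x := by simpa using map_sub_le_add p (x + b) x
  linarith

theorem bddBelow_infConvValues (x : X) : BddBelow (infConvValues p B f x) :=
  ⟨-p x, fun _ hr => neg_le_of_mem_infConvValues hB hf hr⟩

theorem infConv_neg_le {b : X} (hb : b ∈ B) : infConv p B f (-b) ≤ 1 - re (f b) :=
  csInf_le (bddBelow_infConvValues hB hf _) ⟨1, zero_le_one, b, ⟨b, hb, one_smul ℝ b⟩, by simp⟩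

variable (hB₀ : (0 : X) ∈ B)
include hB₀

theorem infConv_le (x : X) : infConv p B f x ≤ p x :=
  csInf_le (bddBelow_infConvValues hB hf x) (self_mem_infConvValues hB₀ x)

theorem infConv_add_le (hBc : Convex ℝ B) (x y : X) :
    infConv p B f (x + y) ≤ infConv p B f x + infConv p B f y := by
  have hsum : ∀ r ∈ infConvValues p B f x, ∀ r' ∈ infConvValues p B f y,
      infConv p B f (x + y) ≤ r + r' := by
    rintro _ ⟨s, hs, b, hb, rfl⟩ _ ⟨s', hs', b', hb', rfl⟩
    have hmem : p (x + y + (b + b')) + (s + s') - re (f (b + b')) ∈ infConvValues p B f (x + y) :=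
      ⟨s + s', add_nonneg hs hs', b + b', hBc.add_smul hs hs' ▸ Set.add_mem_add hb hb', rfl⟩
    have htri : p (x + y + (b + b')) ≤ p (x + b) + p (y + b') := by
      rw [add_add_add_comm]
      exact map_add_le_add p _ _
    have := csInf_le (bddBelow_infConvValues hB hf _) hmem
    rw [f.map_add, map_add re] at this
    unfold infConv
    linarith
  have hx : ∀ r' ∈ infConvValues p B f y, infConv p B f (x + y) - r' ≤ infConv p B f x :=
    fun r' hr' => le_csInf ⟨_, self_mem_infConvValues hB₀ x⟩ fun r hr => by
      linarith [hsum r hr r' hr']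
  have hy : infConv p B f (x + y) - infConv p B f x ≤ infConv p B f y :=
    le_csInf ⟨_, self_mem_infConvValues hB₀ y⟩ fun r' hr' => by linarith [hx r' hr']
  linarith

theorem exists_le_seminorm_norm_sub_le_one (hBc : Convex ℝ B) :
    ∃ g : X →ₗ[𝕜] 𝕜, (∀ x, ‖g x‖ ≤ p x) ∧ ∀ b ∈ B, ‖f b - g b‖ ≤ 1 := by
  obtain ⟨ψ, hψ⟩ := exists_linear_le_of_sublinear (infConv p B f)
    (fun _ hc x => infConv_smul hc x) (infConv_add_le hB hf hB₀ hBc)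
  have hψp : ∀ x, |ψ x| ≤ p x := fun x => abs_le.2
    ⟨neg_le.1 (by simpa using (hψ (-x)).trans (infConv_le hB hf hB₀ (-x))),
      (hψ x).trans (infConv_le hB hf hB₀ x)⟩
  refine ⟨Module.Dual.extendRCLike ψ, Module.Dual.norm_extendRCLike_le_seminorm ψ hψp,
    fun _ hb => hB.norm_apply_le_one_of_re_le_one (φ := f - Module.Dual.extendRCLike ψ)
      (fun b hb => ?_) hb⟩
  have := (hψ (-b)).trans (infConv_neg_le hB hf hb)
  rw [map_neg] at this
  rw [LinearMap.sub_apply, map_sub, Module.Dual.re_extendRCLike_apply]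
  linarith

end Decomposition

section Approximation

variable {𝕜 : Type u} [RCLike 𝕜] {X : Type v} [AddCommGroup X] [Module 𝕜 X]
variable [TopologicalSpace X] [IsTopologicalAddGroup X]

theorem LinearMap.continuous_of_norm_le_seminorm {p : Seminorm 𝕜 X} (hp : Continuous p)
    {g : X →ₗ[𝕜] 𝕜} (hg : ∀ x, ‖g x‖ ≤ p x) : Continuous g := by
  refine continuous_of_continuousAt_zero g ?_
  rw [ContinuousAt, map_zero]
  exact squeeze_zero_norm hg (map_zero p ▸ hp.tendsto 0)

variable [Module ℝ X] [IsScalarTower ℝ 𝕜 X] [ContinuousSMul 𝕜 X] [LocallyConvexSpace ℝ X]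

theorem exists_continuous_seminorm_ball_subset {W : Set X} (hW : W ∈ 𝓝 (0 : X)) :
    ∃ p : Seminorm 𝕜 X, Continuous p ∧ p.ball 0 1 ⊆ W := by
  have : ContinuousSMul ℝ X := IsScalarTower.continuousSMul 𝕜
  obtain ⟨V, ⟨hVn, hVc⟩, hVW⟩ := (LocallyConvexSpace.convex_basis_zero ℝ X).mem_iff.mp hW
  have hK : balancedCore 𝕜 V ∈ 𝓝 (0 : X) := balancedCore_mem_nhds_zero hVn
  have hKc : Convex ℝ (balancedCore 𝕜 V) := hVc.balancedCore (mem_of_mem_nhds hVn)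
  refine ⟨gaugeSeminorm (balancedCore_balanced V) hKc (absorbent_nhds_zero hK),
    continuous_gauge hKc hK, fun x hx => hVW (balancedCore_subset (𝕜 := 𝕜) V ?_)⟩
  rw [Seminorm.mem_ball_zero, gaugeSeminorm_toFun] at hx
  exact setOfPred_gauge_lt_one_subset_self hKc (mem_of_mem_nhds hK) (absorbent_nhds_zero hK) hx

theorem exists_continuous_norm_sub_le_of_continuousWithinAt {B : Set X} (hB : Balanced 𝕜 B)
    (hBc : Convex ℝ B) (hB₀ : (0 : X) ∈ B) {F : X →ₗ[𝕜] 𝕜} (hF : ContinuousWithinAt F B 0)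
    {ε : ℝ} (hε : 0 < ε) : ∃ G : X →ₗ[𝕜] 𝕜, Continuous G ∧ ∀ b ∈ B, ‖F b - G b‖ ≤ ε := by
  obtain ⟨W, hW, hWB⟩ := mem_nhdsWithin_iff_exists_mem_nhds_inter.mp
    (hF.preimage_mem_nhdsWithin (Metric.closedBall_mem_nhds (F 0) hε))
  obtain ⟨p, hp, hpW⟩ := exists_continuous_seminorm_ball_subset (𝕜 := 𝕜) hW
  have hεne : (ε : 𝕜) ≠ 0 := ofReal_ne_zero.2 hε.ne'
  obtain ⟨g, hgp, hgB⟩ := exists_le_seminorm_norm_sub_le_one (f := (ε : 𝕜)⁻¹ • F) hB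
    (fun x hxB hxp => by
      have := hWB ⟨hpW (p.mem_ball_zero.2 hxp), hxB⟩
      simp only [Set.mem_preimage, map_zero, mem_closedBall_zero_iff] at this
      rw [LinearMap.smul_apply, norm_smul, norm_inv, norm_ofReal, abs_of_pos hε]
      exact inv_mul_le_one_of_le₀ this hε.le) hB₀ hBc
  refine ⟨(ε : 𝕜) • g, (LinearMap.continuous_of_norm_le_seminorm hp hgp).const_smul _,
    fun b hb => ?_⟩
  have hsplit : F b - (ε : 𝕜) • g b = (ε : 𝕜) • (((ε : 𝕜)⁻¹ • F) b - g b) := by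
    rw [LinearMap.smul_apply, smul_sub, smul_inv_smul₀ hεne]
  rw [LinearMap.smul_apply, hsplit, norm_smul, norm_of_nonneg hε.le]
  exact mul_le_of_le_one_right hε.le (hgB b hb)

end Approximation

theorem continuousOn_iff_of_induced_eq {X Y : Type*} [TopologicalSpace Y]
    {t₁ t₂ : TopologicalSpace X} {s : Set X}
    (h : TopologicalSpace.induced ((↑) : s → X) t₁ = TopologicalSpace.induced ((↑) : s → X) t₂)
    {f : X → Y} : @ContinuousOn X Y t₁ _ f s ↔ @ContinuousOn X Y t₂ _ f s := by
  rw [@continuousOn_iff_continuous_domRestrict _ _ t₁,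
    @continuousOn_iff_continuous_domRestrict _ _ t₂]
  exact iff_of_eq (congrArg (fun t => @Continuous s Y t _ (s.domRestrict f)) h)

section Gamma

variable {𝕜 : Type u} [RCLike 𝕜] {X : Type v} [AddCommGroup X] [Module 𝕜 X] [Module ℝ X]
variable {t tt g : TopologicalSpace X}

theorem IsGamma.le (hg : IsGamma 𝕜 X t tt g) (htt : IsLCH 𝕜 X tt) : g ≤ tt :=
  hg.2.2 tt htt fun _ _ => rfl

theorem IsGamma.continuousOn_of_continuous (hg : IsGamma 𝕜 X t tt g) {f : X → 𝕜}
    (hf : @Continuous X 𝕜 g _ f) {s : Set X} (hs : VNB 𝕜 X t s) : @ContinuousOn X 𝕜 tt _ f s :=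
  (continuousOn_iff_of_induced_eq (hg.2.1 s hs)).1 (@Continuous.continuousOn _ _ g _ _ _ hf)

variable [IsScalarTower ℝ 𝕜 X]

theorem IsLCH.inf_induced (hg : IsLCH 𝕜 X g) (f : X →ₗ[𝕜] 𝕜) :
    IsLCH 𝕜 X (g ⊓ TopologicalSpace.induced f inferInstance) where
  tag := @topologicalAddGroup_inf X _ g _ hg.tag (topologicalAddGroup_induced f)
  csmul := @continuousSMul_inf 𝕜 X _ _ g _ hg.csmul (continuousSMul_induced f)
  t2 := t2Space_antitone inf_le_left hg.t2
  lcs := LocallyConvexSpace.inf hg.lcs (LocallyConvexSpace.induced (f.restrictScalars ℝ))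

/-- `g ⊓ induced f` also agrees with `tt` on bounded sets, so `g ≤ induced f` by maximality. -/
theorem IsGamma.continuous_of_continuousOn (hg : IsGamma 𝕜 X t tt g) (f : X →ₗ[𝕜] 𝕜)
    (hf : ∀ s : Set X, VNB 𝕜 X t s → @ContinuousOn X 𝕜 tt _ f s) : @Continuous X 𝕜 g _ f := by
  refine continuous_iff_le_induced.2 (le_trans (hg.2.2 _ (hg.1.inf_induced f) fun s hs => ?_)
    inf_le_right)
  have hle : TopologicalSpace.induced ((↑) : s → X) tt ≤
      TopologicalSpace.induced ((↑) : s → X) (TopologicalSpace.induced f inferInstance) := by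
    rw [induced_compose]
    exact continuous_iff_le_induced.1
      ((@continuousOn_iff_continuous_domRestrict _ _ tt).1 (hf s hs))
  rw [induced_inf, hg.2.1 s hs, inf_eq_left.2 hle]

end Gamma

section Bornological

variable {𝕜 : Type u} [RCLike 𝕜]

theorem isLCH_induced_of_injective {Y : Type*} [AddCommGroup Y] [Module 𝕜 Y] [Module ℝ Y]
    [IsScalarTower ℝ 𝕜 Y] (e : Y →ₗ[𝕜] 𝕜) (he : Function.Injective e) :
    IsLCH 𝕜 Y (TopologicalSpace.induced e inferInstance) :=
  letI := TopologicalSpace.induced e inferInstance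
  { tag := topologicalAddGroup_induced e
    csmul := continuousSMul_induced e
    t2 := (Topology.IsEmbedding.mk ⟨rfl⟩ he).t2Space
    lcs := LocallyConvexSpace.induced (e.restrictScalars ℝ) }

instance : Small.{w} 𝕜 :=
  small_map (Module.finBasis ℝ 𝕜).equivFun.toEquiv

variable {X : Type v} [AddCommGroup X] [Module 𝕜 X]

/-- `Bornological` only tests targets in `Type w`, so `f` is tested through `Shrink.{w} 𝕜`. -/
theorem Bornological.continuous_of_isVonNBounded_image {t : TopologicalSpace X}
    (hborn : Bornological.{u, v, w} 𝕜 X t) (f : X →ₗ[𝕜] 𝕜)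
    (hf : ∀ s : Set X, VNB 𝕜 X t s → Bornology.IsVonNBounded 𝕜 (f '' s)) :
    @Continuous X 𝕜 t _ f := by
  have : IsScalarTower ℝ 𝕜 (Shrink.{w} 𝕜) := ⟨fun r c y => (equivShrink 𝕜).symm.injective <| by
    simp only [equivShrink_symm_smul, smul_assoc]⟩
  let e : Shrink.{w} 𝕜 ≃L[𝕜] 𝕜 := Shrink.continuousLinearEquiv 𝕜 𝕜
  have hY : IsLCH 𝕜 (Shrink.{w} 𝕜) inferInstance :=
    isLCH_induced_of_injective (e : Shrink.{w} 𝕜 →ₗ[𝕜] 𝕜) e.injective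
  have hcont := hborn (Shrink.{w} 𝕜) inferInstance inferInstance inferInstance inferInstance _ hY
    ((e.symm : 𝕜 →ₗ[𝕜] Shrink.{w} 𝕜) ∘ₗ f) fun s hs => by
      rw [VNB, LinearMap.coe_comp, Set.image_comp]
      exact (hf s hs).image (e.symm : 𝕜 →L[𝕜] Shrink.{w} 𝕜)
  let := t
  exact (e.continuous.comp hcont).congr fun x => e.apply_symm_apply (f x)

end Bornological

section StrongDual

variable {𝕜 : Type u} [RCLike 𝕜] {X : Type v} [AddCommGroup X] [Module 𝕜 X]
variable {t tt g : TopologicalSpace X}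

theorem mem_closure_strongDualTop_iff {S : Set (dualSub 𝕜 X t)} {F : dualSub 𝕜 X t} :
    F ∈ @closure _ (strongDualTop 𝕜 X t) S ↔ ∀ s : Set X, VNB 𝕜 X t s → ∀ ε > 0,
      ∃ G ∈ S, ∀ x ∈ s, dist ((G : X →ₗ[𝕜] 𝕜) x) ((F : X →ₗ[𝕜] 𝕜) x) < ε := by
  set 𝔖 := {s : Set X | VNB 𝕜 X t s}
  let φ : dualSub 𝕜 X t → UniformOnFun X 𝕜 𝔖 := fun f => UniformOnFun.ofFun 𝔖 (f : X →ₗ[𝕜] 𝕜)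
  have hind : strongDualTop 𝕜 X t =
      TopologicalSpace.induced φ (UniformOnFun.topologicalSpace X 𝕜 𝔖) := by
    rw [strongDualTop, dualTopOn, funUC, induced_compose]
    rfl
  have hne : 𝔖.Nonempty := ⟨0, vnb_zero⟩
  have hdir : DirectedOn (· ⊆ ·) 𝔖 := fun a ha b hb =>
    ⟨a ∪ b, VNB.union ha hb, subset_union_left, subset_union_right⟩
  rw [hind]
  let := TopologicalSpace.induced φ (UniformOnFun.topologicalSpace X 𝕜 𝔖)
  have hb := (UniformOnFun.hasBasis_nhds_of_basis X 𝕜 𝔖 (φ F) hne hdir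
    Metric.uniformity_basis_dist).comap φ
  rw [← nhds_induced] at hb
  rw [mem_closure_iff_nhds_basis hb]
  exact ⟨fun h s hs ε hε => h (s, ε) ⟨hs, hε⟩, fun h i hi => h i.1 hi.1 i.2 hi.2⟩

variable [Module ℝ X] [IsScalarTower ℝ 𝕜 X]

theorem IsGamma.continuous_of_mem_closure (hg : IsGamma 𝕜 X t tt g) {F : dualSub 𝕜 X t}
    (hF : F ∈ @closure _ (strongDualTop 𝕜 X t)
      {f : dualSub 𝕜 X t | (f : X →ₗ[𝕜] 𝕜) ∈ dualSub 𝕜 X tt}) :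
    @Continuous X 𝕜 g _ (F : X →ₗ[𝕜] 𝕜) := by
  refine hg.continuous_of_continuousOn _ fun s hs => ?_
  let := tt
  refine continuousOn_of_uniform_approx_of_continuousOn fun u hu => ?_
  obtain ⟨ε, hε, hεu⟩ := Metric.mem_uniformity_dist.1 hu
  obtain ⟨G, hG, hGF⟩ := mem_closure_strongDualTop_iff.1 hF s hs ε hε
  exact ⟨_, hG.continuousOn, fun x hx => hεu ((dist_comm _ _).trans_lt (hGF x hx))⟩

theorem IsGamma.mem_closure_of_continuous (hg : IsGamma 𝕜 X t tt g) (htt : IsLCH 𝕜 X tt)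
    (hbbcl : BBCl 𝕜 X t tt) (hdual : ∀ f : X →ₗ[𝕜] 𝕜, f ∈ dualSub 𝕜 X tt → f ∈ dualSub 𝕜 X t)
    {F : dualSub 𝕜 X t} (hF : @Continuous X 𝕜 g _ (F : X →ₗ[𝕜] 𝕜)) :
    F ∈ @closure _ (strongDualTop 𝕜 X t)
      {f : dualSub 𝕜 X t | (f : X →ₗ[𝕜] 𝕜) ∈ dualSub 𝕜 X tt} := by
  refine mem_closure_strongDualTop_iff.2 fun s hs ε hε => ?_
  obtain ⟨B, hsB, ⟨hB, hBc⟩, hBt, -⟩ := hbbcl (s ∪ 0) (hs.union vnb_zero)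
  have hB₀ : (0 : X) ∈ B := hsB (Or.inr rfl)
  let := tt
  have := htt.tag
  have := htt.csmul
  have := htt.lcs
  obtain ⟨G, hGc, hGF⟩ := exists_continuous_norm_sub_le_of_continuousWithinAt hB hBc hB₀
    (hg.continuousOn_of_continuous hF hBt 0 hB₀) (half_pos hε)
  refine ⟨⟨G, hdual G hGc⟩, hGc, fun x hx => ?_⟩
  rw [dist_comm, dist_eq_norm]
  exact (hGF x (hsB (Or.inl hx))).trans_lt (half_lt_self hε)

end StrongDual

theorem statement11_general {𝕜 : Type u} [RCLike 𝕜]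
    {X : Type v} [AddCommGroup X] [Module 𝕜 X] [Module ℝ X] [IsScalarTower ℝ 𝕜 X]
    (t tt g : TopologicalSpace X) (hborn : Bornological 𝕜 X t)
    (htt : IsLCH 𝕜 X tt) (hg : IsGamma 𝕜 X t tt g)
    (hBtB : ∀ s : Set X, VNB 𝕜 X t s ↔ VNB 𝕜 X g s)
    (hbbcl : BBCl 𝕜 X t tt) :
    (∀ f : X →ₗ[𝕜] 𝕜, f ∈ dualSub 𝕜 X g → f ∈ dualSub 𝕜 X t) ∧
    (∀ f : X →ₗ[𝕜] 𝕜, f ∈ dualSub 𝕜 X tt → f ∈ dualSub 𝕜 X t) ∧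
    {f : ↥(dualSub 𝕜 X t) | (f : X →ₗ[𝕜] 𝕜) ∈ dualSub 𝕜 X g} =
      @closure _ (strongDualTop 𝕜 X t)
        {f : ↥(dualSub 𝕜 X t) | (f : X →ₗ[𝕜] 𝕜) ∈ dualSub 𝕜 X tt} := by
  have hgt : ∀ f : X →ₗ[𝕜] 𝕜, f ∈ dualSub 𝕜 X g → f ∈ dualSub 𝕜 X t := fun f hf =>
    hborn.continuous_of_isVonNBounded_image f fun s hs => ((hBtB s).1 hs).image hf
  have httt : ∀ f : X →ₗ[𝕜] 𝕜, f ∈ dualSub 𝕜 X tt → f ∈ dualSub 𝕜 X t := fun f hf =>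
    hgt f (continuous_le_dom (hg.le htt) hf)
  exact ⟨hgt, httt, Set.Subset.antisymm
    (fun _ hF => hg.mem_closure_of_continuous htt hbbcl httt hF)
    (fun _ hF => hg.continuous_of_mem_closure hF)⟩

/-- Under condition (BτBγ̃), if a bornological locally convex Hausdorff
space `(X, τ)` satisfies (BBCl) for `τ̃`, then `(X, γ̃)'` is the closure of `(X, τ̃)'` in
`(X, τ)'_b`. -/
theorem statement11 {𝕜 : Type u} [RCLike 𝕜]
    {X : Type v} [AddCommGroup X] [Module 𝕜 X] [Module ℝ X] [IsScalarTower ℝ 𝕜 X]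
    (t tt g : TopologicalSpace X) (hborn : Bornological 𝕜 X t)
    (ht : IsLCH 𝕜 X t) (htt : IsLCH 𝕜 X tt) (hg : IsGamma 𝕜 X t tt g)
    (hBtB : ∀ s : Set X, VNB 𝕜 X t s ↔ VNB 𝕜 X g s)
    (hbbcl : BBCl 𝕜 X t tt) :
    (∀ f : X →ₗ[𝕜] 𝕜, f ∈ dualSub 𝕜 X g → f ∈ dualSub 𝕜 X t) ∧
    (∀ f : X →ₗ[𝕜] 𝕜, f ∈ dualSub 𝕜 X tt → f ∈ dualSub 𝕜 X t) ∧
    {f : ↥(dualSub 𝕜 X t) | (f : X →ₗ[𝕜] 𝕜) ∈ dualSub 𝕜 X g} =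
      @closure _ (strongDualTop 𝕜 X t)
        {f : ↥(dualSub 𝕜 X t) | (f : X →ₗ[𝕜] 𝕜) ∈ dualSub 𝕜 X tt} :=
  statement11_general t tt g hborn htt hg hBtB hbbcl
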